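/- arXiv:1211.5118 — 5 statements merged into one kernel-verified Lean document; each statement's English description precedes it below -/
import Mathlib

section
/- If V is a trivial spectrum linear subspace of Mat_n(K), then for every nonzero vector X in K^n there exists a nonzero vector Y in K^n such that Y^T N X = 0 for all N ∈ V. -/
open scoped Matrix

theorem Submodule.exists_ne_zero_dotProduct_eq_zero_of_lt_top {K ι : Type*} [Field K]
    [Fintype ι] [DecidableEq ι] {W : Submodule K (ι → K)} (hW : W < ⊤) :
    ∃ Y : ι → K, Y ≠ 0 ∧ ∀ w ∈ W, Y ⬝ᵥ w = 0 := by
  obtain ⟨f, hf, hWf⟩ := W.exists_le_ker_of_lt_top hW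
  refine ⟨(dotProductEquiv K ι).symm f, ?_, fun w hw => ?_⟩
  · simpa using hf
  · rw [← dotProductEquiv_apply_apply, LinearEquiv.apply_symm_apply]
    exact hWf hw

theorem Matrix.map_mulVec_lt_top_of_forall_mulVec_ne {K ι : Type*} [Field K] [Fintype ι]
    (V : Submodule K (Matrix ι ι K)) {X : ι → K} (hV : ∀ N ∈ V, N *ᵥ X ≠ X) :
    V.map ((mulVecBilin K K).flip X) < ⊤ := by
  refine lt_top_iff_ne_top.2 fun htop => ?_
  obtain ⟨N, hN, hNX⟩ : X ∈ V.map ((mulVecBilin K K).flip X) := htop ▸ Submodule.mem_top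
  exact hV N hN hNX

theorem stmt_1 {K : Type*} [Field K] {n : ℕ}
    (V : Submodule K (Matrix (Fin n) (Fin n) K))
    (hV : ∀ N ∈ V, ∀ μ : K, μ ≠ 0 → ∀ x : Fin n → K, N.mulVec x = μ • x → x = 0)
    (X : Fin n → K) (hX : X ≠ 0) :
    ∃ Y : Fin n → K, Y ≠ 0 ∧ ∀ N ∈ V, Y ⬝ᵥ N.mulVec X = 0 := by
  have hfix : ∀ N ∈ V, N *ᵥ X ≠ X := fun N hN hNX =>
    hX (hV N hN 1 one_ne_zero X (by rwa [one_smul]))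
  obtain ⟨Y, hY, hYW⟩ := Submodule.exists_ne_zero_dotProduct_eq_zero_of_lt_top
    (Matrix.map_mulVec_lt_top_of_forall_mulVec_ne V hfix)
  exact ⟨Y, hY, fun N hN => hYW _ (Submodule.mem_map_of_mem hN)⟩
end

section
/- Let P ∈ GL_n(K). The space P·Alt_n(K) (all products PA with A alternating) is a trivial spectrum subspace of Mat_n(K) if and only if the quadratic form X ↦ X^T P X on K^n is non-isotropic (i.e., X^T P X = 0 implies X = 0). -/
/-!
Every alternating `A` satisfies `xᵀAx = 0`. Hence if `PAx = μx` with `μ ≠ 0`, the vector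
`y = Ax` satisfies `yᵀPy = μ yᵀx = μ xᵀAx = 0`, so non-isotropy gives `y = 0` and then
`μx = Py = 0`. Conversely, if `XᵀPX = 0` with `X ≠ 0`, then `x = PX ≠ 0` is orthogonal to `X`,
and the alternating matrix `A = Xvᵀ - vXᵀ` with `vᵀx = 1` maps `x` to `X`, making `x` an
eigenvector of `PA` for the eigenvalue `1`.
-/

namespace Matrix

variable {n : Type*} [Fintype n]

theorem dotProduct_mulVec_self_eq_zero_of_alternating {R : Type*} [CommRing R]
    {A : Matrix n n R} (hA : Aᵀ = -A) (hdiag : ∀ i, A i i = 0) (x : n → R) :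
    x ⬝ᵥ A *ᵥ x = 0 := by
  have hskew : ∀ i j, A j i = -A i j := fun i j => by
    simpa using congrFun (congrFun hA i) j
  have hsum : x ⬝ᵥ A *ᵥ x = ∑ p : n × n, x p.1 * A p.1 p.2 * x p.2 := by
    simp [Fintype.sum_prod_type, mulVec, dotProduct, Finset.mul_sum, mul_assoc]
  rw [hsum]
  -- the terms at `(i, j)` and `(j, i)` cancel, and the diagonal terms vanish
  refine Finset.sum_ninvolution Prod.swap (fun ⟨i, j⟩ => ?_) (fun ⟨i, j⟩ hne => ?_)
    (fun _ => Finset.mem_univ _) (fun _ => rfl)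
  · simp only [Prod.swap, hskew i j]
    ring
  · intro hswap
    obtain rfl : j = i := congrArg Prod.fst hswap
    exact hne (by simp [hdiag])

variable {K : Type*} [Field K]

theorem eq_zero_of_mul_alternating_mulVec_eq_smul {P A : Matrix n n K}
    (hP : ∀ X : n → K, X ⬝ᵥ P *ᵥ X = 0 → X = 0) (hA : Aᵀ = -A) (hdiag : ∀ i, A i i = 0)
    {μ : K} (hμ : μ ≠ 0) {x : n → K} (hx : (P * A) *ᵥ x = μ • x) : x = 0 := by
  have hPy : P *ᵥ (A *ᵥ x) = μ • x := by rwa [mulVec_mulVec]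
  have hxy : x ⬝ᵥ A *ᵥ x = 0 := dotProduct_mulVec_self_eq_zero_of_alternating hA hdiag x
  have hy : A *ᵥ x = 0 := hP _ (by rw [hPy, dotProduct_smul, dotProduct_comm, hxy, smul_zero])
  rw [hy, mulVec_zero] at hPy
  exact (smul_eq_zero.mp hPy.symm).resolve_left hμ

theorem exists_alternating_mulVec_eq [DecidableEq n] {x X : n → K} (hx : x ≠ 0)
    (hXx : X ⬝ᵥ x = 0) : ∃ A : Matrix n n K, Aᵀ = -A ∧ (∀ i, A i i = 0) ∧ A *ᵥ x = X := by
  obtain ⟨i, hi⟩ := Function.ne_iff.mp hx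
  set v : n → K := Pi.single i (x i)⁻¹
  have hvx : v ⬝ᵥ x = 1 := by rw [single_dotProduct, inv_mul_cancel₀ hi]
  refine ⟨vecMulVec X v - vecMulVec v X, ?_, fun j => ?_, ?_⟩
  · simp only [transpose_sub, transpose_vecMulVec, neg_sub]
  · simp only [sub_apply, vecMulVec_apply]
    ring
  · simp [sub_mulVec, vecMulVec_mulVec, hvx, hXx]

end Matrix

open Matrix in
theorem stmt_6 {K : Type*} [Field K] {n : ℕ}
    (P : Matrix (Fin n) (Fin n) K) (hP : IsUnit P) :
    (∀ A : Matrix (Fin n) (Fin n) K, Aᵀ = -A → (∀ i, A i i = 0) →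
        ∀ μ : K, μ ≠ 0 → ∀ x : Fin n → K, (P * A).mulVec x = μ • x → x = 0) ↔
      (∀ X : Fin n → K, X ⬝ᵥ P.mulVec X = 0 → X = 0) := by
  refine ⟨fun hspec X hX => ?_, fun hP' A hA hdiag μ hμ x hx =>
    eq_zero_of_mul_alternating_mulVec_eq_smul hP' hA hdiag hμ hx⟩
  by_contra hX0
  have hPX : P *ᵥ X ≠ 0 := by
    simpa using (mulVec_injective_iff_isUnit.mpr hP).ne hX0
  obtain ⟨A, hA, hdiag, hAPX⟩ := exists_alternating_mulVec_eq hPX hX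
  exact hPX <| hspec A hA hdiag 1 one_ne_zero _ (by rw [← mulVec_mulVec, hAPX, one_smul])
end

section
/- If A is an affine subspace of GL_n(K) (all elements invertible) containing I_n, then for every N in the direction space W = A − I_n and every nonzero scalar μ ∈ K, the matrix I_n + μN is invertible; consequently N has no nonzero eigenvalue in K. -/
namespace Matrix

variable {ι K : Type*} [Fintype ι] [DecidableEq ι] [Field K]

theorem eq_zero_of_mulVec_eq_smul_of_isUnit_one_sub_inv_smul {N : Matrix ι ι K} {μ : K}
    (hμ : μ ≠ 0) (hunit : IsUnit (1 - μ⁻¹ • N)) {x : ι → K} (hx : N *ᵥ x = μ • x) :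
    x = 0 := by
  have hker : (1 - μ⁻¹ • N) *ᵥ x = 0 := by
    rw [sub_mulVec, one_mulVec, smul_mulVec, hx, smul_smul, inv_mul_cancel₀ hμ, one_smul,
      sub_self]
  exact mulVec_injective_of_isUnit hunit (hker.trans (mulVec_zero _).symm)

end Matrix

theorem stmt_10 {K : Type*} [Field K] {n : ℕ}
    (A : Set (Matrix (Fin n) (Fin n) K)) (W : Submodule K (Matrix (Fin n) (Fin n) K))
    (hAW : A = (fun N => 1 + N) '' (W : Set (Matrix (Fin n) (Fin n) K)))
    (hinv : ∀ M ∈ A, IsUnit M) :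
    ∀ N ∈ W, ∀ μ : K, μ ≠ 0 →
      IsUnit (1 + μ • N) ∧ ∀ x : Fin n → K, N.mulVec x = μ • x → x = 0 := by
  intro N hN μ hμ
  have hunit : ∀ c : K, IsUnit (1 + c • N) := fun c =>
    hinv _ (hAW ▸ ⟨c • N, W.smul_mem c hN, rfl⟩)
  refine ⟨hunit μ, fun x hx => ?_⟩
  have hunit' : IsUnit (1 - μ⁻¹ • N) := by
    simpa only [neg_smul, ← sub_eq_add_neg] using hunit (-μ⁻¹)
  exact Matrix.eq_zero_of_mulVec_eq_smul_of_isUnit_one_sub_inv_smul hμ hunit' hx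
end

section
/- If the dimension bound dim V ≤ k(k−1)/2 holds for trivial spectrum subspaces of Mat_k(K) for all k < n, and V ⊆ Mat_n(K) is a trivial spectrum subspace that is reducible (some proper nonzero subspace of K^n is invariant under all elements of V), then dim V ≤ n(n−1)/2. -/
/-!
Take `U` invariant under `V`, of dimension `p` and codimension `q`. In a basis adapted to `U` the
elements of `V` are block upper triangular with diagonal blocks `A` (the restriction to `U`) and
`D` (the action on `K^n ⧸ U`). The `A`-blocks form a trivial-spectrum space of `p × p` matrices.
On the subspace of `V` where `A = 0`, an eigenvector of `D` lifts to an eigenvector of the whole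
matrix, so these `D`-blocks form a trivial-spectrum space of `q × q` matrices. What remains, the
maps with `A = D = 0`, lies in the `pq`-dimensional space of off-diagonal blocks. Hence
`dim V ≤ C(p, 2) + C(q, 2) + pq = C(n, 2)`.
-/

open Module Module.End Submodule LinearMap Matrix

section

variable {K E : Type*} [Field K] [AddCommGroup E] [Module K E]

def Module.End.HasTrivialSpectrum (f : Module.End K E) : Prop :=
  ∀ μ : K, μ ≠ 0 → ∀ x : E, f x = μ • x → x = 0

namespace Module.End.HasTrivialSpectrum

variable {f : Module.End K E}

theorem restrict (hf : HasTrivialSpectrum f) {p : Submodule K E} (hp : ∀ x ∈ p, f x ∈ p) :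
    HasTrivialSpectrum (f.restrict hp) := fun μ hμ x hx =>
  Subtype.ext (hf μ hμ x (congrArg Subtype.val hx))

/-- If `f` kills `p`, an eigenvector `v + p` of `f` on `E ⧸ p` lifts to the eigenvector
`v + μ⁻¹ • (f v - μ • v)` of `f`. -/
theorem mapQ (hf : HasTrivialSpectrum f) {p : Submodule K E} (hpf : p ≤ ker f)
    (hp : p ≤ p.comap f) : HasTrivialSpectrum (p.mapQ p f hp) := by
  intro μ hμ y hy
  obtain ⟨v, rfl⟩ := p.mkQ_surjective y
  have hu : f v - μ • v ∈ p := (Submodule.Quotient.eq p).mp hy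
  have hfu : f (f v - μ • v) = 0 := hpf hu
  have hlift : f (v + μ⁻¹ • (f v - μ • v)) = μ • (v + μ⁻¹ • (f v - μ • v)) := by
    rw [map_add, map_smul, hfu, smul_zero, add_zero, smul_add, smul_smul, mul_inv_cancel₀ hμ,
      one_smul, add_sub_cancel]
  have hv : v = -(μ⁻¹ • (f v - μ • v)) := eq_neg_of_add_eq_zero_left (hf μ hμ _ hlift)
  rw [mkQ_apply, Quotient.mk_eq_zero, hv]
  exact p.neg_mem (p.smul_mem _ hu)

theorem conj {F : Type*} [AddCommGroup F] [Module K F] (hf : HasTrivialSpectrum f)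
    (e : E ≃ₗ[K] F) :
    HasTrivialSpectrum (e.conj f) := fun μ hμ x hx => by
  rw [LinearEquiv.conj_apply_apply] at hx
  have hx' : f (e.symm x) = μ • e.symm x := by rw [← e.symm_apply_apply (f _), hx, map_smul]
  simpa using hf μ hμ _ hx'

end Module.End.HasTrivialSpectrum

theorem Matrix.hasTrivialSpectrum_toLin' {n : Type*} [Fintype n] [DecidableEq n]
    {M : Matrix n n K} :
    HasTrivialSpectrum (Matrix.toLin' M) ↔ ∀ μ : K, μ ≠ 0 → ∀ x, M *ᵥ x = μ • x → x = 0 :=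
  Iff.rfl

def Submodule.restrictLinear (p : Submodule K E) : p.compatibleMaps p →ₗ[K] Module.End K p where
  toFun f := f.1.restrict f.2
  map_add' _ _ := rfl
  map_smul' _ _ := rfl

theorem Submodule.restrictLinear_eq_zero_iff {p : Submodule K E} {f : p.compatibleMaps p} :
    p.restrictLinear f = 0 ↔ p ≤ ker f.1 := by
  refine ⟨fun h x hx => congrArg Subtype.val (LinearMap.congr_fun h ⟨x, hx⟩), fun h => ?_⟩
  ext x
  exact h x.2

theorem Submodule.mapQLinear_eq_zero_iff {p : Submodule K E} {f : p.compatibleMaps p} :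
    p.mapQLinear p f = 0 ↔ range f.1 ≤ p := by
  rw [range_le_iff_comap, eq_top_iff]
  refine ⟨fun h x _ => ?_, fun h => ?_⟩
  · exact (Quotient.mk_eq_zero p).mp (LinearMap.congr_fun h (p.mkQ x))
  · ext x
    exact (Quotient.mk_eq_zero p).mpr (h trivial)

theorem Submodule.finrank_le_of_forall_le_ker_of_range_le [FiniteDimensional K E]
    (p : Submodule K E) (S : Submodule K (Module.End K E)) (hS : ∀ f ∈ S, p ≤ ker f ∧ range f ≤ p) :
    finrank K S ≤ finrank K (E ⧸ p) * finrank K p := by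
  let Φ : (E ⧸ p →ₗ[K] p) →ₗ[K] Module.End K E := lcomp K E p.mkQ ∘ₗ compRight K p.subtype
  have hSΦ : S ≤ range Φ := by
    intro f hf
    obtain ⟨hker, hrange⟩ := hS f hf
    refine ⟨p.liftQ (f.codRestrict p fun x => hrange (mem_range_self f x))
      (by rwa [ker_codRestrict]), ?_⟩
    ext x
    rfl
  calc finrank K S ≤ finrank K (range Φ) := Submodule.finrank_mono hSΦ
    _ ≤ finrank K (E ⧸ p →ₗ[K] p) := finrank_range_le Φ
    _ = finrank K (E ⧸ p) * finrank K p := finrank_linearMap K K _ _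

theorem finrank_le_of_le_compatibleMaps [FiniteDimensional K E] {p : Submodule K E}
    {V : Submodule K (Module.End K E)} (hVp : V ≤ p.compatibleMaps p)
    (hV : ∀ f ∈ V, HasTrivialSpectrum f) {a b : ℕ}
    (ha : ∀ S : Submodule K (Module.End K p), (∀ f ∈ S, HasTrivialSpectrum f) →
      finrank K S ≤ a)
    (hb : ∀ S : Submodule K (Module.End K (E ⧸ p)), (∀ f ∈ S, HasTrivialSpectrum f) →
      finrank K S ≤ b) :
    finrank K V ≤ a + b + finrank K (E ⧸ p) * finrank K p := by
  let res : V →ₗ[K] Module.End K p := p.restrictLinear ∘ₗ inclusion hVp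
  let quo : ker res →ₗ[K] Module.End K (E ⧸ p) :=
    p.mapQLinear p ∘ₗ inclusion hVp ∘ₗ (ker res).subtype
  have hres : finrank K (range res) ≤ a := ha _ <| by
    rintro _ ⟨f, rfl⟩
    exact (hV f f.2).restrict (hVp f.2)
  have hquo : finrank K (range quo) ≤ b := hb _ <| by
    rintro _ ⟨f, rfl⟩
    have hf : p ≤ ker (f : Module.End K E) := restrictLinear_eq_zero_iff.mp f.2
    exact (hV _ f.1.2).mapQ hf (hVp f.1.2)
  have hker : finrank K (ker quo) ≤ finrank K (E ⧸ p) * finrank K p := by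
    let ι := V.subtype ∘ₗ (ker res).subtype ∘ₗ (ker quo).subtype
    have hι : Function.Injective ι :=
      Subtype.val_injective.comp (Subtype.val_injective.comp Subtype.val_injective)
    rw [← finrank_range_of_inj hι]
    refine finrank_le_of_forall_le_ker_of_range_le p _ ?_
    rintro _ ⟨f, rfl⟩
    have hf : p ≤ ker (f : Module.End K E) := restrictLinear_eq_zero_iff.mp f.1.2
    have hf' : range (f : Module.End K E) ≤ p :=
      (mapQLinear_eq_zero_iff (f := inclusion hVp f.1.1)).mp (mem_ker.mp f.2)
    exact ⟨hf, hf'⟩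
  have := finrank_range_add_finrank_ker res
  have := finrank_range_add_finrank_ker (V := ker res) quo
  omega

theorem finrank_le_of_forall_matrix [FiniteDimensional K E] {k a : ℕ} (hk : finrank K E = k)
    (hbound : ∀ S : Submodule K (Matrix (Fin k) (Fin k) K),
      (∀ N ∈ S, ∀ μ : K, μ ≠ 0 → ∀ x : Fin k → K, N *ᵥ x = μ • x → x = 0) → finrank K S ≤ a)
    (S : Submodule K (Module.End K E)) (hS : ∀ f ∈ S, HasTrivialSpectrum f) :
    finrank K S ≤ a := by
  let e : E ≃ₗ[K] (Fin k → K) := LinearEquiv.ofFinrankEq _ _ (by simp [hk])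
  let φ := e.conj.trans LinearMap.toMatrix'
  rw [← φ.finrank_map_eq]
  refine hbound _ ?_
  rintro _ ⟨f, hf, rfl⟩
  rw [← hasTrivialSpectrum_toLin']
  simpa [φ] using (hS f hf).conj e

theorem Nat.choose_two_add (p q : ℕ) : (p + q).choose 2 = p.choose 2 + q.choose 2 + p * q := by
  induction q with
  | zero => simp
  | succ q ih =>
    rw [← add_assoc, Nat.choose_succ_succ', ih, Nat.choose_succ_succ' q, Nat.choose_one_right,
      Nat.choose_one_right]
    ring

end

theorem stmt_12_general {K : Type*} [Field K] {n : ℕ}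
    (hbound : ∀ k < n, ∀ U : Submodule K (Matrix (Fin k) (Fin k) K),
      (∀ N ∈ U, ∀ μ : K, μ ≠ 0 → ∀ x : Fin k → K, N.mulVec x = μ • x → x = 0) →
        Module.finrank K U ≤ k * (k - 1) / 2)
    (V : Submodule K (Matrix (Fin n) (Fin n) K))
    (hV : ∀ N ∈ V, ∀ μ : K, μ ≠ 0 → ∀ x : Fin n → K, N.mulVec x = μ • x → x = 0)
    (hred : ∃ U : Submodule K (Fin n → K), U ≠ ⊥ ∧ U ≠ ⊤ ∧
      ∀ N ∈ V, ∀ x ∈ U, N.mulVec x ∈ U) :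
    Module.finrank K V ≤ n * (n - 1) / 2 := by
  obtain ⟨U, hUbot, hUtop, hVU⟩ := hred
  simp only [← Nat.choose_two_right] at hbound ⊢
  set p := finrank K U
  set q := finrank K ((Fin n → K) ⧸ U)
  have hpq : q + p = n := by simpa using U.finrank_quotient_add_finrank
  have hp : p < n := by simpa using Submodule.finrank_lt hUtop
  have hq : q < n := by
    have := Submodule.finrank_eq_zero.not.mpr hUbot
    omega
  rw [← Matrix.toLin'.finrank_map_eq]
  calc _ ≤ p.choose 2 + q.choose 2 + q * p := by
        refine finrank_le_of_le_compatibleMaps ?_ ?_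
          (finrank_le_of_forall_matrix rfl (hbound _ hp))
          (finrank_le_of_forall_matrix rfl (hbound _ hq))
        · rintro _ ⟨N, hN, rfl⟩ x hx
          exact hVU N hN x hx
        · rintro _ ⟨N, hN, rfl⟩
          exact hasTrivialSpectrum_toLin'.mpr (hV N hN)
    _ = n.choose 2 := by rw [← hpq, add_comm q, Nat.choose_two_add, mul_comm]

theorem stmt_12 {K : Type*} [Field K] {n : ℕ} (hn : 2 ≤ n)
    (hbound : ∀ k < n, ∀ U : Submodule K (Matrix (Fin k) (Fin k) K),
      (∀ N ∈ U, ∀ μ : K, μ ≠ 0 → ∀ x : Fin k → K, N.mulVec x = μ • x → x = 0) →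
        Module.finrank K U ≤ k * (k - 1) / 2)
    (V : Submodule K (Matrix (Fin n) (Fin n) K))
    (hV : ∀ N ∈ V, ∀ μ : K, μ ≠ 0 → ∀ x : Fin n → K, N.mulVec x = μ • x → x = 0)
    (hred : ∃ U : Submodule K (Fin n → K), U ≠ ⊥ ∧ U ≠ ⊤ ∧
      ∀ N ∈ V, ∀ x ∈ U, N.mulVec x ∈ U) :
    Module.finrank K V ≤ n * (n - 1) / 2 :=
  stmt_12_general hbound V hV hred
end

section
/- Suppose V is a trivial spectrum subspace of Mat_n(K) (block sizes d and n−d) that contains every matrix of the form [[0,0],[B,0]] with B arbitrary of size (n−d)×d. Then for every N ∈ V, the matrix [[A(N),C(N)],[0,D(N)]] belongs to V, and consequently D(V) = {D(N) : N ∈ V} is a trivial spectrum subspace of Mat_{n−d}(K). -/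
/-!
Subtracting the member `[[0,0],[B(N),0]]` of `V` from `N` leaves the block upper triangular
matrix `[[A(N),C(N)],[0,D(N)]]` in `V`. A nonzero eigenvalue `μ` of `D(N)` would make
`det (μ - D(N))`, and hence `det (μ - [[A(N),C(N)],[0,D(N)]]) = det (μ - A(N)) * det (μ - D(N))`,
vanish, so `μ` would be an eigenvalue of that member of `V`.
-/

namespace Matrix

theorem sub_fromBlocks_zero_toBlocks₂₁ {l m n o α : Type*} [AddGroup α]
    (M : Matrix (n ⊕ o) (l ⊕ m) α) :
    M - fromBlocks 0 0 M.toBlocks₂₁ 0 = fromBlocks M.toBlocks₁₁ M.toBlocks₁₂ 0 M.toBlocks₂₂ := by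
  conv_lhs => rw [← fromBlocks_toBlocks M]
  rw [sub_eq_add_neg, fromBlocks_neg, fromBlocks_add]
  simp

section Eigenvector

variable {n R : Type*} [Fintype n] [DecidableEq n] [CommRing R]

theorem mulVec_eq_smul_iff_smul_one_sub_mulVec_eq_zero (M : Matrix n n R) (μ : R) (v : n → R) :
    M *ᵥ v = μ • v ↔ (μ • 1 - M) *ᵥ v = 0 := by
  rw [sub_mulVec, smul_mulVec, one_mulVec, sub_eq_zero, eq_comm]

theorem exists_mulVec_eq_smul_iff_det_eq_zero [IsDomain R] (M : Matrix n n R) (μ : R) :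
    (∃ v ≠ 0, M *ᵥ v = μ • v) ↔ (μ • 1 - M).det = 0 := by
  simp only [mulVec_eq_smul_iff_smul_one_sub_mulVec_eq_zero]
  exact exists_mulVec_eq_zero_iff

theorem exists_fromBlocks_zero₂₁_mulVec_eq_smul {m : Type*} [Fintype m] [DecidableEq m]
    [IsDomain R] (A : Matrix n n R) (C : Matrix n m R) (D : Matrix m m R) {μ : R}
    (hD : ∃ x ≠ 0, D *ᵥ x = μ • x) : ∃ z ≠ 0, fromBlocks A C 0 D *ᵥ z = μ • z := by
  have hblocks : μ • 1 - fromBlocks A C 0 D = fromBlocks (μ • 1 - A) (-C) 0 (μ • 1 - D) := by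
    rw [← fromBlocks_one, fromBlocks_smul, sub_eq_add_neg, fromBlocks_neg, fromBlocks_add]
    simp [sub_eq_add_neg]
  rw [exists_mulVec_eq_smul_iff_det_eq_zero] at hD ⊢
  rw [hblocks, det_fromBlocks_zero₂₁, hD, mul_zero]

end Eigenvector

end Matrix

open Matrix in
theorem stmt_15_general {K : Type*} [Field K] {d m : ℕ}
    (V : Submodule K (Matrix (Fin d ⊕ Fin m) (Fin d ⊕ Fin m) K))
    (hV : ∀ N ∈ V, ∀ μ : K, μ ≠ 0 → ∀ x : Fin d ⊕ Fin m → K, N.mulVec x = μ • x → x = 0)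
    (hB : ∀ B : Matrix (Fin m) (Fin d) K, Matrix.fromBlocks 0 0 B 0 ∈ V) :
    (∀ N ∈ V, Matrix.fromBlocks (Matrix.toBlocks₁₁ N) (Matrix.toBlocks₁₂ N) 0
        (Matrix.toBlocks₂₂ N) ∈ V) ∧
      ∀ N ∈ V, ∀ μ : K, μ ≠ 0 →
        ∀ x : Fin m → K, (Matrix.toBlocks₂₂ N).mulVec x = μ • x → x = 0 := by
  have hupper : ∀ N ∈ V, fromBlocks N.toBlocks₁₁ N.toBlocks₁₂ 0 N.toBlocks₂₂ ∈ V := fun N hN ↦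
    sub_fromBlocks_zero_toBlocks₂₁ N ▸ V.sub_mem hN (hB N.toBlocks₂₁)
  refine ⟨hupper, fun N hN μ hμ x hx ↦ ?_⟩
  by_contra hx0
  obtain ⟨z, hz0, hz⟩ :=
    exists_fromBlocks_zero₂₁_mulVec_eq_smul N.toBlocks₁₁ N.toBlocks₁₂ _ ⟨x, hx0, hx⟩
  exact hz0 (hV _ (hupper N hN) μ hμ z hz)

theorem stmt_15 {K : Type*} [Field K] {d m : ℕ} (hd : 0 < d) (hm : 0 < m)
    (V : Submodule K (Matrix (Fin d ⊕ Fin m) (Fin d ⊕ Fin m) K))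
    (hV : ∀ N ∈ V, ∀ μ : K, μ ≠ 0 → ∀ x : Fin d ⊕ Fin m → K, N.mulVec x = μ • x → x = 0)
    (hB : ∀ B : Matrix (Fin m) (Fin d) K, Matrix.fromBlocks 0 0 B 0 ∈ V) :
    (∀ N ∈ V, Matrix.fromBlocks (Matrix.toBlocks₁₁ N) (Matrix.toBlocks₁₂ N) 0
        (Matrix.toBlocks₂₂ N) ∈ V) ∧
      ∀ N ∈ V, ∀ μ : K, μ ≠ 0 →
        ∀ x : Fin m → K, (Matrix.toBlocks₂₂ N).mulVec x = μ • x → x = 0 :=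
  stmt_15_general V hV hB
end
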